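/- Let f, g : ℝ^d → ℝ with f α²-strongly convex and g convex L-Lipschitz, and for λ ≥ 0 let z(λ) minimize f + λg. If z is differentiable at λ, then ‖dz/dλ‖₂ ≤ L/α². -/
import Mathlib


noncomputable def euclNorm {d : ℕ} (v : Fin d → ℝ) : ℝ := Real.sqrt (∑ i, v i ^ 2)

def StrongConvexW {d : ℕ} (m : ℝ) (f : (Fin d → ℝ) → ℝ) : Prop :=
  ∀ x y : Fin d → ℝ, ∀ t : ℝ, 0 ≤ t → t ≤ 1 →
    f (t • x + (1 - t) • y) ≤ t * f x + (1 - t) * f y - m / 2 * (t * (1 - t)) * euclNorm (x - y) ^ 2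

def LipschitzW {d : ℕ} (L : ℝ) (g : (Fin d → ℝ) → ℝ) : Prop :=
  ∀ x y : Fin d → ℝ, |g x - g y| ≤ L * euclNorm (x - y)

lemma euclNorm_nonneg {d : ℕ} (v : Fin d → ℝ) : 0 ≤ euclNorm v := Real.sqrt_nonneg _

lemma euclNorm_smul {d : ℕ} (c : ℝ) (v : Fin d → ℝ) :
    euclNorm (c • v) = |c| * euclNorm v := by
  unfold euclNorm
  rw [← Real.sqrt_sq_eq_abs, ← Real.sqrt_mul (sq_nonneg c), Finset.mul_sum]
  congr 1
  apply Finset.sum_congr rfl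
  intro i _
  simp [mul_pow]

lemma euclNorm_neg_sub {d : ℕ} (x y : Fin d → ℝ) :
    euclNorm (x - y) = euclNorm (y - x) := by
  unfold euclNorm
  congr 1
  apply Finset.sum_congr rfl
  intro i _
  simp [Pi.sub_apply]
  ring

lemma euclNorm_continuous {d : ℕ} : Continuous (euclNorm (d := d)) := by
  unfold euclNorm
  fun_prop


/-- derivative bound for the minimizer path of f + λg. -/
theorem stmt_2 {d : ℕ} (α L : ℝ) (hα : 0 < α) (hL : 0 ≤ L)
    (f g : (Fin d → ℝ) → ℝ)
    (hfsc : StrongConvexW (α ^ 2) f)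
    (hgconv : ConvexOn ℝ Set.univ g) (hgL : LipschitzW L g)
    (z : ℝ → (Fin d → ℝ))
    (hz : ∀ l : ℝ, 0 ≤ l → ∀ w : Fin d → ℝ, f (z l) + l * g (z l) ≤ f w + l * g w)
    (l : ℝ) (hl : 0 ≤ l) (z' : Fin d → ℝ) (hderiv : HasDerivAt z z' l) :
    euclNorm z' ≤ L / α ^ 2 := by
  set A := α ^ 2 with hAdef
  have hA0 : 0 < A := pow_pos hα 2
  -- quadratic growth from minimality
  have grow : ∀ c : ℝ, 0 ≤ c → ∀ w : Fin d → ℝ,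
      f (z c) + c * g (z c) + A / 2 * euclNorm (w - z c) ^ 2 ≤ f w + c * g w := by
    intro c hc w
    set N := euclNorm (w - z c) with hN
    have key : ∀ t : ℝ, t ∈ Set.Ioo (0:ℝ) 1 →
        A / 2 * (1 - t) * N ^ 2 ≤ (f w + c * g w) - (f (z c) + c * g (z c)) := by
      rintro t ⟨ht, ht1⟩
      have hsc := hfsc w (z c) t ht.le ht1.le
      have hgc := hgconv.2 (Set.mem_univ w) (Set.mem_univ (z c)) ht.le
        (sub_nonneg.mpr ht1.le) (by ring : t + (1 - t) = 1)
      simp only [smul_eq_mul] at hgc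
      have hmin := hz c hc (t • w + (1 - t) • z c)
      have h1 : t * (A / 2 * (1 - t) * N ^ 2) ≤
          t * ((f w + c * g w) - (f (z c) + c * g (z c))) := by
        nlinarith [mul_le_mul_of_nonneg_left hgc hc]
      exact le_of_mul_le_mul_left h1 ht
    have tl : Filter.Tendsto (fun t : ℝ => A / 2 * (1 - t) * N ^ 2)
        (nhdsWithin 0 (Set.Ioo 0 1)) (nhds (A / 2 * (1 - 0) * N ^ 2)) := by
      apply Filter.Tendsto.mono_left _ nhdsWithin_le_nhds
      exact (Continuous.tendsto (by fun_prop) 0)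
    have hne : (nhdsWithin (0:ℝ) (Set.Ioo 0 1)).NeBot := by
      exact left_nhdsWithin_Ioo_neBot (by norm_num)
    have := le_of_tendsto tl (eventually_nhdsWithin_of_forall key)
    simp only [sub_zero, mul_one] at this
    linarith
  -- stability of minimizers
  have stab : ∀ μ ν : ℝ, 0 ≤ μ → 0 ≤ ν →
      euclNorm (z μ - z ν) ≤ L / A * |μ - ν| := by
    intro μ ν hμ hν
    set D := euclNorm (z μ - z ν) with hD
    have hD0 : 0 ≤ D := euclNorm_nonneg _
    have h1 := grow μ hμ (z ν)
    have h2 := grow ν hν (z μ)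
    rw [euclNorm_neg_sub, ← hD] at h1
    rw [← hD] at h2
    have hsum : A * D ^ 2 ≤ (ν - μ) * (g (z μ) - g (z ν)) := by nlinarith
    have hg := hgL (z μ) (z ν)
    rw [← hD] at hg
    have hAD : A * D ^ 2 ≤ |μ - ν| * (L * D) := by
      calc A * D ^ 2 ≤ (ν - μ) * (g (z μ) - g (z ν)) := hsum
        _ ≤ |(ν - μ) * (g (z μ) - g (z ν))| := le_abs_self _
        _ = |ν - μ| * |g (z μ) - g (z ν)| := abs_mul _ _
        _ ≤ |ν - μ| * (L * D) := mul_le_mul_of_nonneg_left hg (abs_nonneg _)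
        _ = |μ - ν| * (L * D) := by rw [abs_sub_comm]
    rcases eq_or_lt_of_le hD0 with h | h
    · rw [← h]
      positivity
    · rw [div_mul_eq_mul_div, le_div_iff₀ hA0]
      nlinarith
  -- pass to the derivative via right slopes
  have hslope : Filter.Tendsto (slope z l) (nhdsWithin l (Set.Ioi l)) (nhds z') :=
    (hasDerivAt_iff_tendsto_slope.mp hderiv).mono_left
      (nhdsWithin_mono l (fun x hx => ne_of_gt hx))
  have htend : Filter.Tendsto (fun t => euclNorm (slope z l t))
      (nhdsWithin l (Set.Ioi l)) (nhds (euclNorm z')) :=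
    (euclNorm_continuous.tendsto z').comp hslope
  have hbound : ∀ t ∈ Set.Ioi l, euclNorm (slope z l t) ≤ L / A := by
    intro t ht
    have htl : l < t := ht
    have ht0 : 0 ≤ t := le_of_lt (lt_of_le_of_lt hl htl)
    have : slope z l t = (t - l)⁻¹ • (z t - z l) := rfl
    rw [this, euclNorm_smul]
    have hst := stab t l ht0 hl
    have habs : |t - l| = t - l := abs_of_pos (by linarith)
    rw [abs_inv, habs]
    rw [habs] at hst
    calc (t - l)⁻¹ * euclNorm (z t - z l) ≤ (t - l)⁻¹ * (L / A * (t - l)) := by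
          exact mul_le_mul_of_nonneg_left hst (inv_nonneg.mpr (by linarith))
      _ = L / A := by
          rw [mul_comm (L / A), ← mul_assoc, inv_mul_cancel₀ (by linarith : t - l ≠ 0), one_mul]
  exact le_of_tendsto htend (eventually_nhdsWithin_of_forall hbound)
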